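/- arXiv:2510.04163 — 5 statements merged into one kernel-verified Lean document; each statement's English description precedes it below -/
import Mathlib

section
/- Let M be a matroid of rank r on a finite ground set E with a stressed hyperplane H of size at least r. Let (B_1,…,B_n) and (B'_1,…,B'_n) be two tuples of bases of M, all of type exactly 1 (i.e., |B_i \ H| = 1 and |B'_i \ H| = 1 for all i), with the same multiset union. Then there exists an exchange sequence in M transforming (B_1,…,B_n) into (B'_1,…,B'_n) such that every subset appearing in every intermediate tuple is a type-1 basis of M. -/
open Set

namespace WhitePaving

variable {α : Type*}

/-- A single symmetric exchange step between two `n`-tuples of bases of the matroid `N`: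
the tuples agree except in two positions `i ≠ j`, where `B i` is replaced by
`(B i \ {a}) ∪ {b}` and `B j` by `(B j \ {b}) ∪ {a}` for some `a ∈ B i \ B j` and
`b ∈ B j \ B i`, both resulting sets being bases of `N`. -/
def ExchStep (N : Matroid α) {n : ℕ} (B B' : Fin n → Set α) : Prop :=
  ∃ i j : Fin n, i ≠ j ∧ ∃ a b : α,
    a ∈ B i \ B j ∧ b ∈ B j \ B i ∧
    B' i = (B i \ {a}) ∪ {b} ∧ B' j = (B j \ {b}) ∪ {a} ∧
    N.IsBase (B' i) ∧ N.IsBase (B' j) ∧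
    ∀ k : Fin n, k ≠ i → k ≠ j → B' k = B k

/-- `seq` is an exchange sequence (of length `ℓ`) of `n`-tuples in the matroid `N`:
each tuple is obtained from the previous one by a symmetric exchange step. -/
def IsExchSeq (N : Matroid α) {n ℓ : ℕ} (seq : Fin (ℓ + 1) → Fin n → Set α) : Prop :=
  ∀ t : Fin ℓ, ExchStep N (seq t.castSucc) (seq t.succ)

/-- Two `n`-tuples are connected by some exchange sequence in `N`. -/
def ExchConnected (N : Matroid α) {n : ℕ} (B B' : Fin n → Set α) : Prop :=
  ∃ (ℓ : ℕ) (seq : Fin (ℓ + 1) → Fin n → Set α),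
    seq 0 = B ∧ seq (Fin.last ℓ) = B' ∧ IsExchSeq N seq

/-- Two `n`-tuples of sets have the same multiset union: each element appears in the
same number of coordinates of both. -/
def SameUnion {n : ℕ} (B B' : Fin n → Set α) : Prop :=
  ∀ e : α, Nat.card {i : Fin n // e ∈ B i} = Nat.card {i : Fin n // e ∈ B' i}

/-- White's conjecture in degree `n` for the matroid `N`: any two `n`-tuples of bases of `N`
with the same multiset union are connected by an exchange sequence in `N`. -/
def WhiteDeg (N : Matroid α) (n : ℕ) : Prop :=
  ∀ B B' : Fin n → Set α, (∀ i, N.IsBase (B i)) → (∀ i, N.IsBase (B' i)) →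
    SameUnion B B' → ExchConnected N B B'

/-- White's conjecture for the matroid `N`. -/
def White (N : Matroid α) : Prop := ∀ n : ℕ, 1 ≤ n → WhiteDeg N n

/-- `C` is a circuit of `M`: a minimal dependent subset of the ground set. -/
def IsCircuitP (M : Matroid α) (C : Set α) : Prop :=
  C ⊆ M.E ∧ ¬ M.Indep C ∧ ∀ x ∈ C, M.Indep (C \ {x})

/-- `M` has rank `r`: every base of `M` has exactly `r` elements. -/
def HasRank (M : Matroid α) (r : ℕ) : Prop :=
  ∀ B, M.IsBase B → B.ncard = r

/-- `M` is paving: every circuit of `M` has size `r` or `r + 1`, where `r` is the rank. -/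
def IsPavingP (M : Matroid α) : Prop :=
  ∀ C B, IsCircuitP M C → M.IsBase B → C.ncard = B.ncard ∨ C.ncard = B.ncard + 1

/-- `H` is a hyperplane of `M`: a maximal proper flat. -/
def IsHyperplaneP (M : Matroid α) (H : Set α) : Prop :=
  M.IsFlat H ∧ H ≠ M.E ∧ ∀ F, M.IsFlat F → H ⊂ F → F = M.E

/-- A hyperplane `H` of a rank-`r` matroid is stressed if every `r`-element
subset of `H` is a circuit. -/
def IsStressedP (M : Matroid α) (r : ℕ) (H : Set α) : Prop :=
  IsHyperplaneP M H ∧ ∀ S ⊆ H, S.ncard = r → IsCircuitP M S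

/-- `Mt` is the relaxation of the rank-`r` matroid `M` at the stressed hyperplane `H`:
a matroid on the same ground set whose bases are the bases of `M` together with the
`r`-element subsets of `H`. -/
def IsRelaxation (M Mt : Matroid α) (r : ℕ) (H : Set α) : Prop :=
  Mt.E = M.E ∧ ∀ B : Set α, (Mt.IsBase B ↔ (M.IsBase B ∨ (B ⊆ H ∧ B.ncard = r)))

/-- Deletion of the set `D` from the matroid `M`. -/
def deleteP (M : Matroid α) (D : Set α) : Matroid α := Matroid.restrict M (M.E \ D)

/-- Contraction of the set `C` in the matroid `M`. -/
def contractP (M : Matroid α) (C : Set α) : Matroid α :=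
  Matroid.dual (deleteP (Matroid.dual M) C)


/-! ### Auxiliary machinery for the proof of `type_one_exchange` -/

section Aux

/-- The set identity underlying the reversibility of an exchange step. -/
lemma swap_swap_set {s : Set α} {a b : α} (ha : a ∈ s) (hb : b ∉ s) :
    (((s \ {a}) ∪ {b}) \ {b}) ∪ {a} = s := by
  have hab : a ≠ b := fun h => hb (h ▸ ha)
  ext x
  by_cases hx : x = a <;> by_cases hx' : x = b <;>
    simp [hx, hx', ha, hb, hab]

/-- Exchange steps are reversible. -/
lemma ExchStep.symm {N : Matroid α} {n : ℕ} {B B' : Fin n → Set α}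
    (hBb : ∀ i, N.IsBase (B i)) (h : ExchStep N B B') : ExchStep N B' B := by
  obtain ⟨i, j, hij, a, b, ha, hb, hi, hj, hbi, hbj, hk⟩ := h
  have hab : b ≠ a := fun h => ha.2 (h ▸ hb.1)
  refine ⟨i, j, hij, b, a, ⟨?_, ?_⟩, ⟨?_, ?_⟩, ?_, ?_, ?_, ?_,
    fun k h1 h2 => (hk k h1 h2).symm⟩
  · rw [hi]; exact Or.inr rfl
  · rw [hj]; rintro (⟨-, hbb⟩ | hba)
    · exact hbb rfl
    · exact hab (by simpa using hba)
  · rw [hj]; exact Or.inr rfl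
  · rw [hi]; rintro (⟨-, han⟩ | haa)
    · exact han rfl
    · exact hab.symm (by simpa using haa)
  · rw [hi, swap_swap_set ha.1 hb.2]
  · rw [hj, swap_swap_set hb.1 ha.2]
  · exact hBb i
  · exact hBb j

/-- Type-1 goodness of a tuple. -/
def GoodT (M : Matroid α) (H : Set α) {n : ℕ} (B : Fin n → Set α) : Prop :=
  ∀ i, M.IsBase (B i) ∧ ((B i) \ H).ncard = 1

/-- Connectivity through type-1 exchange sequences. -/
def Conn (M : Matroid α) (H : Set α) {n : ℕ} (B B' : Fin n → Set α) : Prop :=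
  ∃ (ℓ : ℕ) (seq : Fin (ℓ + 1) → Fin n → Set α),
    seq 0 = B ∧ seq (Fin.last ℓ) = B' ∧ IsExchSeq M seq ∧
    ∀ (u : Fin (ℓ + 1)) (i : Fin n), M.IsBase (seq u i) ∧ ((seq u i) \ H).ncard = 1

lemma conn_refl {M : Matroid α} {H : Set α} {n : ℕ} {B : Fin n → Set α}
    (hB : GoodT M H B) : Conn M H B B :=
  ⟨0, fun _ => B, rfl, rfl, fun t => t.elim0, fun _ i => hB i⟩

lemma Conn.head {M : Matroid α} {H : Set α} {n : ℕ} {B B'' B' : Fin n → Set α}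
    (hst : ExchStep M B B'') (hB : GoodT M H B) (hc : Conn M H B'' B') :
    Conn M H B B' := by
  obtain ⟨ℓ, seq, h0, hl, hstep, hgood⟩ := hc
  refine ⟨ℓ + 1, Fin.cases B seq, by simp, ?_, ?_, ?_⟩
  · have h1 : Fin.last (ℓ + 1) = Fin.succ (Fin.last ℓ) := rfl
    rw [h1]; simp only [Fin.cases_succ]; exact hl
  · intro t
    refine Fin.cases ?_ ?_ t
    · simp only [Fin.castSucc_zero, Fin.cases_zero, Fin.cases_succ, h0]
      exact hst
    · intro j
      rw [← Fin.succ_castSucc]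
      simp only [Fin.cases_succ]
      exact hstep j
  · intro u i
    refine Fin.cases ?_ ?_ u
    · simp only [Fin.cases_zero]; exact hB i
    · intro j; simp only [Fin.cases_succ]; exact hgood j i

lemma Conn.snoc {M : Matroid α} {H : Set α} {n : ℕ} {B B'' B' : Fin n → Set α}
    (hc : Conn M H B B'') (hst : ExchStep M B'' B') (hB' : GoodT M H B') :
    Conn M H B B' := by
  obtain ⟨ℓ, seq, h0, hl, hstep, hgood⟩ := hc
  refine ⟨ℓ + 1, Fin.snoc seq B', ?_, Fin.snoc_last _ _, ?_, ?_⟩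
  · have h1 : (0 : Fin (ℓ + 1 + 1)) = Fin.castSucc 0 := rfl
    rw [h1]; simp only [Fin.snoc_castSucc]; exact h0
  · intro t
    refine Fin.lastCases ?_ ?_ t
    · rw [Fin.succ_last]
      simp only [Fin.snoc_last, Fin.snoc_castSucc, hl]
      exact hst
    · intro j
      rw [Fin.succ_castSucc]
      simp only [Fin.snoc_castSucc]
      exact hstep j
  · intro u i
    refine Fin.lastCases ?_ ?_ u
    · simp only [Fin.snoc_last]; exact hB' i
    · intro j; simp only [Fin.snoc_castSucc]; exact hgood j i

/-- The number of coordinates of `B` containing `e`. -/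
noncomputable def cnt {n : ℕ} (B : Fin n → Set α) (e : α) : ℕ :=
  Nat.card {i : Fin n // e ∈ B i}

lemma cnt_congr {n : ℕ} {B C : Fin n → Set α} (σ : Equiv.Perm (Fin n)) {e f : α}
    (h : ∀ i, e ∈ B i ↔ f ∈ C (σ i)) : cnt B e = cnt C f :=
  Nat.card_congr (Equiv.subtypeEquiv σ h)

lemma cnt_pos {n : ℕ} {B : Fin n → Set α} {e : α} {i : Fin n} (h : e ∈ B i) :
    0 < cnt B e :=
  @Nat.card_pos _ ⟨⟨i, h⟩⟩ _

lemma cnt_exists {n : ℕ} {B : Fin n → Set α} {e : α} (h : 0 < cnt B e) :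
    ∃ i, e ∈ B i := by
  rw [cnt, Nat.card_pos_iff] at h
  obtain ⟨⟨i, hi⟩⟩ := h.1
  exact ⟨i, hi⟩

open Classical in
lemma cnt_eq_card {n : ℕ} (B : Fin n → Set α) (e : α) :
    cnt B e = (Finset.univ.filter (fun i => e ∈ B i)).card := by
  rw [cnt, Nat.card_eq_fintype_card, Fintype.card_subtype]

open Classical in
lemma cnt_succ {n : ℕ} (B : Fin (n + 1) → Set α) (e : α) :
    cnt B e = (if e ∈ B 0 then 1 else 0) + cnt (fun i => B (Fin.succ i)) e := by
  rw [cnt_eq_card, cnt_eq_card, Finset.card_filter, Finset.card_filter,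
    Fin.sum_univ_succ]

open Classical in
/-- The rows of `S` meeting `S' 0 \ S 0`, other than row `0`. -/
noncomputable def Jset {n : ℕ} (S S' : Fin (n + 1) → Set α) : Finset (Fin (n + 1)) :=
  Finset.univ.filter (fun j => j ≠ 0 ∧ (S j ∩ (S' 0 \ S 0)).Nonempty)

lemma key_count {n : ℕ} {S S' : Fin (n + 1) → Set α}
    (hfinY : (S' 0 \ S 0).Finite)
    (hU : ∀ e, cnt S e = cnt S' e)
    (hYne : (S' 0 \ S 0).Nonempty)
    (hYS' : ∀ j, j ≠ 0 → (S' j ∩ (S 0 \ S' 0)).Nonempty → (S' 0 \ S 0) ⊆ S' j) :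
    1 + (Jset S' S).card ≤ (Jset S S').card := by
  classical
  set Y : Set α := S' 0 \ S 0 with hY
  have claim1 : ∀ c ∈ hfinY.toFinset, cnt S c ≤ (Jset S S').card := by
    intro c hc
    rw [Set.Finite.mem_toFinset] at hc
    rw [cnt_eq_card]
    apply Finset.card_le_card
    intro i hi
    rw [Finset.mem_filter] at hi
    rw [Jset, Finset.mem_filter]
    refine ⟨Finset.mem_univ _, ?_, ⟨c, hi.2, hc⟩⟩
    rintro rfl
    exact hc.2 hi.2
  have claim2 : ∀ c ∈ hfinY.toFinset, 1 + (Jset S' S).card ≤ cnt S' c := by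
    intro c hc
    rw [Set.Finite.mem_toFinset] at hc
    rw [cnt_eq_card]
    have hsub : insert (0 : Fin (n + 1)) (Jset S' S) ⊆
        Finset.univ.filter (fun i => c ∈ S' i) := by
      intro j hj
      rw [Finset.mem_insert] at hj
      rw [Finset.mem_filter]
      refine ⟨Finset.mem_univ _, ?_⟩
      rcases hj with rfl | hj
      · exact hc.1
      · rw [Jset, Finset.mem_filter] at hj
        exact hYS' j hj.2.1 hj.2.2 hc
    have h0 : (0 : Fin (n + 1)) ∉ Jset S' S := by
      rw [Jset, Finset.mem_filter]; tauto
    calc 1 + (Jset S' S).card = (insert (0 : Fin (n + 1)) (Jset S' S)).card := by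
          rw [Finset.card_insert_of_notMem h0]; omega
      _ ≤ _ := Finset.card_le_card hsub
  have hYcard : 0 < hfinY.toFinset.card := by
    rw [Finset.card_pos]
    obtain ⟨y, hy⟩ := hYne
    exact ⟨y, hfinY.mem_toFinset.mpr hy⟩
  have hsum1 : ∑ c ∈ hfinY.toFinset, cnt S c ≤ hfinY.toFinset.card * (Jset S S').card :=
    Finset.sum_le_card_nsmul _ _ _ claim1
  have hsum2 : hfinY.toFinset.card * (1 + (Jset S' S).card) ≤
      ∑ c ∈ hfinY.toFinset, cnt S' c :=
    Finset.card_nsmul_le_sum _ _ _ claim2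
  have heq : ∑ c ∈ hfinY.toFinset, cnt S c = ∑ c ∈ hfinY.toFinset, cnt S' c :=
    Finset.sum_congr rfl (fun c _ => hU c)
  have := le_trans hsum2 (heq ▸ hsum1)
  exact Nat.le_of_mul_le_mul_left (by linarith) hYcard

/-- The key combinatorial lemma: a good swap exists on one of the two sides. -/
lemma key_lemma {n : ℕ} {S S' : Fin (n + 1) → Set α}
    (hfin : ∀ i, (S i).Finite) (hfin' : ∀ i, (S' i).Finite)
    (hU : ∀ e, cnt S e = cnt S' e)
    (hcard : (S 0).ncard = (S' 0).ncard) (hne : S 0 ≠ S' 0) :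
    (∃ (j : Fin (n + 1)) (c a : α), j ≠ 0 ∧ c ∈ S' 0 \ S 0 ∧ c ∈ S j ∧
      a ∈ S 0 \ S j ∧ a ∉ S' 0) ∨
    (∃ (j : Fin (n + 1)) (c a : α), j ≠ 0 ∧ c ∈ S 0 \ S' 0 ∧ c ∈ S' j ∧
      a ∈ S' 0 \ S' j ∧ a ∉ S 0) := by
  by_contra hcon
  push_neg at hcon
  obtain ⟨hA, hB⟩ := hcon
  -- nonemptiness of the two difference sets
  have hXne : (S 0 \ S' 0).Nonempty := by
    rw [Set.nonempty_iff_ne_empty]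
    intro h
    exact hne (Set.eq_of_subset_of_ncard_le (Set.diff_eq_empty.mp h) hcard.ge (hfin' 0))
  have hYne : (S' 0 \ S 0).Nonempty := by
    rw [Set.nonempty_iff_ne_empty]
    intro h
    exact hne (Set.eq_of_subset_of_ncard_le (Set.diff_eq_empty.mp h) hcard.le (hfin 0)).symm
  -- derived inclusion properties
  have hXS : ∀ j, j ≠ 0 → (S j ∩ (S' 0 \ S 0)).Nonempty → (S 0 \ S' 0) ⊆ S j := by
    intro j hj ⟨c, hcS, hcY⟩ x hx
    by_contra hxj
    exact hx.2 (hA j c x hj hcY hcS ⟨hx.1, hxj⟩)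
  have hYS' : ∀ j, j ≠ 0 → (S' j ∩ (S 0 \ S' 0)).Nonempty → (S' 0 \ S 0) ⊆ S' j := by
    intro j hj ⟨c, hcS, hcY⟩ x hx
    by_contra hxj
    exact hx.2 (hB j c x hj hcY hcS ⟨hx.1, hxj⟩)
  have h1 : 1 + (Jset S' S).card ≤ (Jset S S').card :=
    key_count ((hfin' 0).subset Set.diff_subset) hU hYne hYS'
  have h2 : 1 + (Jset S S').card ≤ (Jset S' S).card :=
    key_count ((hfin 0).subset Set.diff_subset) (fun e => (hU e).symm) hXne hXS
  omega

section Matroid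

variable {M : Matroid α} {H : Set α} {r s : ℕ}

lemma indep_of_subset_H (hH : IsStressedP M r H) (hfin : M.E.Finite)
    (hHcard : r ≤ H.ncard) (hrs : r = s + 1)
    {S : Set α} (hS : S ⊆ H) (hcard : S.ncard = s) : M.Indep S := by
  have hHE : H ⊆ M.E := hH.1.1.subset_ground
  have hHfin : H.Finite := hfin.subset hHE
  have hSfin : S.Finite := hHfin.subset hS
  have hex : ∃ y ∈ H, y ∉ S := by
    by_contra hcon
    push_neg at hcon
    have : H = S := subset_antisymm hcon hS
    rw [this, hcard] at hHcard
    omega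
  obtain ⟨y, hyH, hyS⟩ := hex
  have hcirc : IsCircuitP M (insert y S) := by
    apply hH.2
    · exact Set.insert_subset hyH hS
    · rw [Set.ncard_insert_of_notMem hyS hSfin, hcard, hrs]
  have := hcirc.2.2 y (Set.mem_insert _ _)
  rwa [Set.insert_diff_self_of_notMem hyS] at this

lemma base_of_parts (hr : HasRank M r) (hH : IsStressedP M r H) (hfin : M.E.Finite)
    (hHcard : r ≤ H.ncard) (hrs : r = s + 1)
    {T : Set α} (hTE : T ⊆ M.E) (h1 : (T ∩ H).ncard = s) (h2 : (T \ H).ncard = 1) :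
    M.IsBase T := by
  have hHE : H ⊆ M.E := hH.1.1.subset_ground
  have hHfin : H.Finite := hfin.subset hHE
  set S : Set α := T ∩ H with hSdef
  have hSH : S ⊆ H := Set.inter_subset_right
  have hSfin : S.Finite := hHfin.subset hSH
  have hSi : M.Indep S := indep_of_subset_H hH hfin hHcard hrs hSH h1
  obtain ⟨x, hx⟩ := Set.ncard_eq_one.mp h2
  have hxT : x ∈ T := by
    have : x ∈ T \ H := hx ▸ rfl
    exact this.1
  have hxH : x ∉ H := by
    have : x ∈ T \ H := hx ▸ rfl
    exact this.2
  have hxS : x ∉ S := fun h => hxH (hSH h)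
  have hTsx : T = insert x S := by
    ext t
    constructor
    · intro ht
      by_cases htH : t ∈ H
      · exact Set.mem_insert_of_mem _ ⟨ht, htH⟩
      · have : t ∈ T \ H := ⟨ht, htH⟩
        rw [hx] at this
        exact Or.inl this
    · rintro (rfl | ht)
      · exact hxT
      · exact ht.1
  have hHcl : H ⊆ M.closure S := by
    intro z hz
    by_cases hzS : z ∈ S
    · exact M.subset_closure S (hSH.trans hHE) hzS
    · have hcirc : IsCircuitP M (insert z S) := by
        apply hH.2
        · exact Set.insert_subset hz hSH
        · rw [Set.ncard_insert_of_notMem hzS hSfin, h1, hrs]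
      have hdep := hcirc.2.1
      rw [hSi.insert_indep_iff] at hdep
      push_neg at hdep
      have := hdep.1
      by_contra hzcl
      exact this ⟨hHE hz, hzcl⟩
  have hxcl : x ∉ M.closure S := by
    intro hmem
    have h3 : M.closure S ⊆ M.closure H := M.closure_subset_closure hSH
    rw [hH.1.1.closure] at h3
    exact hxH (h3 hmem)
  have hTi : M.Indep T := by
    rw [hTsx]
    rw [hSi.insert_indep_iff]
    exact Or.inl ⟨hxT |> hTE, hxcl⟩
  have hTcard : T.ncard = r := by
    rw [hTsx, Set.ncard_insert_of_notMem hxS hSfin, h1, hrs]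
  obtain ⟨Bb, hBb, hTB⟩ := hTi.exists_isBase_superset
  have hBcard : Bb.ncard = r := hr Bb hBb
  have hBfin : Bb.Finite := hfin.subset hBb.subset_ground
  have : T = Bb := Set.eq_of_subset_of_ncard_le hTB (by rw [hBcard, hTcard]) hBfin
  rw [this]
  exact hBb

lemma good_parts (hr : HasRank M r) (hfin : M.E.Finite) (hrs : r = s + 1)
    {T : Set α} (hT : M.IsBase T) (h2 : (T \ H).ncard = 1) :
    T ⊆ M.E ∧ (T ∩ H).ncard = s := by
  have hTE : T ⊆ M.E := hT.subset_ground
  have hTfin : T.Finite := hfin.subset hTE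
  have hsplit : (T ∩ H).ncard + (T \ H).ncard = T.ncard :=
    Set.ncard_inter_add_ncard_diff_eq_ncard T H hTfin
  have hTcard : T.ncard = r := hr T hT
  refine ⟨hTE, by omega⟩

end Matroid

section Swap

variable {M : Matroid α} {H : Set α} {r s : ℕ}

lemma swap_set_good (hr : HasRank M r) (hH : IsStressedP M r H) (hfin : M.E.Finite)
    (hHcard : r ≤ H.ncard) (hrs : r = s + 1)
    {T : Set α} (hT : M.IsBase T) (h2 : (T \ H).ncard = 1)
    {a b : α} (haT : a ∈ T) (hbT : b ∉ T) (hbE : b ∈ M.E) (hab : a ∈ H ↔ b ∈ H) :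
    M.IsBase ((T \ {a}) ∪ {b}) ∧ (((T \ {a}) ∪ {b}) \ H).ncard = 1 := by
  obtain ⟨hTE, h1⟩ := good_parts hr hfin hrs hT h2
  have hTfin : T.Finite := hfin.subset hTE
  have hne : a ≠ b := fun h => hbT (h ▸ haT)
  have hT'E : (T \ {a}) ∪ {b} ⊆ M.E :=
    Set.union_subset (Set.diff_subset.trans hTE) (Set.singleton_subset_iff.mpr hbE)
  by_cases haH : a ∈ H
  · have hbH : b ∈ H := hab.mp haH
    have hinter : ((T \ {a}) ∪ {b}) ∩ H = insert b ((T ∩ H) \ {a}) := by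
      ext t
      by_cases ht : t = b <;> simp [ht, hbH] <;> tauto
    have hdiffH : ((T \ {a}) ∪ {b}) \ H = T \ H := by
      ext t
      by_cases ht : t = b <;> by_cases ht' : t = a <;>
        simp [ht, ht', hbH, haH] <;> tauto
    have hbW : b ∉ (T ∩ H) \ {a} := fun h => hbT h.1.1
    have haTH : a ∈ T ∩ H := ⟨haT, haH⟩
    have hWfin : ((T ∩ H) \ {a}).Finite := (hTfin.inter_of_left H).diff
    have hWcard : ((T ∩ H) \ {a}).ncard + 1 = (T ∩ H).ncard :=
      Set.ncard_diff_singleton_add_one haTH (hTfin.inter_of_left H)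
    have hicard : (((T \ {a}) ∪ {b}) ∩ H).ncard = s := by
      rw [hinter, Set.ncard_insert_of_notMem hbW hWfin]
      omega
    have hdcard : (((T \ {a}) ∪ {b}) \ H).ncard = 1 := by rw [hdiffH]; exact h2
    exact ⟨base_of_parts hr hH hfin hHcard hrs hT'E hicard hdcard, hdcard⟩
  · have hbH : b ∉ H := fun h => haH (hab.mpr h)
    have hinter : ((T \ {a}) ∪ {b}) ∩ H = T ∩ H := by
      ext t
      by_cases ht : t = b <;> by_cases ht' : t = a <;>
        simp [ht, ht', hbH, haH] <;> tauto
    have hTH : T \ H = {a} := by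
      obtain ⟨x, hx⟩ := Set.ncard_eq_one.mp h2
      have : a ∈ T \ H := ⟨haT, haH⟩
      rw [hx] at this ⊢
      rw [Set.mem_singleton_iff] at this
      rw [this]
    have hdiffH : ((T \ {a}) ∪ {b}) \ H = {b} := by
      ext t
      constructor
      · rintro ⟨ht | ht, htH⟩
        · have : t ∈ T \ H := ⟨ht.1, htH⟩
          rw [hTH, Set.mem_singleton_iff] at this
          exact absurd this ht.2
        · exact ht
      · rintro rfl
        exact ⟨Or.inr rfl, hbH⟩
    have hicard : (((T \ {a}) ∪ {b}) ∩ H).ncard = s := by rw [hinter]; exact h1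
    have hdcard : (((T \ {a}) ∪ {b}) \ H).ncard = 1 := by
      rw [hdiffH]; exact Set.ncard_singleton b
    exact ⟨base_of_parts hr hH hfin hHcard hrs hT'E hicard hdcard, hdcard⟩

lemma swap_good (hr : HasRank M r) (hH : IsStressedP M r H) (hfin : M.E.Finite)
    (hHcard : r ≤ H.ncard) (hrs : r = s + 1)
    {n : ℕ} {B : Fin n → Set α} (hG : GoodT M H B) {i j : Fin n} (hij : i ≠ j)
    {a b : α} (ha : a ∈ B i \ B j) (hb : b ∈ B j \ B i) (habH : a ∈ H ↔ b ∈ H) :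
    ∃ B'' : Fin n → Set α, ExchStep M B B'' ∧ GoodT M H B'' ∧
      (∀ e, cnt B e = cnt B'' e) ∧
      B'' i = (B i \ {a}) ∪ {b} ∧ B'' j = (B j \ {b}) ∪ {a} ∧
      (∀ k, k ≠ i → k ≠ j → B'' k = B k) := by
  classical
  have hab : a ≠ b := fun h => hb.2 (h ▸ ha.1)
  set Ti : Set α := (B i \ {a}) ∪ {b} with hTi
  set Tj : Set α := (B j \ {b}) ∪ {a} with hTj
  set B'' : Fin n → Set α := Function.update (Function.update B i Ti) j Tj with hB''
  have hvi : B'' i = Ti := by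
    rw [hB'', Function.update_of_ne hij, Function.update_self]
  have hvj : B'' j = Tj := by
    rw [hB'', Function.update_self]
  have hvk : ∀ k, k ≠ i → k ≠ j → B'' k = B k := by
    intro k hki hkj
    rw [hB'', Function.update_of_ne hkj, Function.update_of_ne hki]
  have hGi : M.IsBase Ti ∧ (Ti \ H).ncard = 1 :=
    swap_set_good hr hH hfin hHcard hrs (hG i).1 (hG i).2 ha.1 hb.2
      ((hG j).1.subset_ground hb.1) habH
  have hGj : M.IsBase Tj ∧ (Tj \ H).ncard = 1 :=
    swap_set_good hr hH hfin hHcard hrs (hG j).1 (hG j).2 hb.1 ha.2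
      ((hG i).1.subset_ground ha.1) habH.symm
  refine ⟨B'', ⟨i, j, hij, a, b, ha, hb, hvi, hvj, hvi ▸ hGi.1, hvj ▸ hGj.1, hvk⟩,
    ?_, ?_, hvi, hvj, hvk⟩
  · intro k
    by_cases hki : k = i
    · subst hki; rw [hvi]; exact hGi
    by_cases hkj : k = j
    · subst hkj; rw [hvj]; exact hGj
    · rw [hvk k hki hkj]; exact hG k
  · intro e
    by_cases hea : e = a
    · subst hea
      refine cnt_congr (Equiv.swap i j) (fun k => ?_)
      by_cases hki : k = i
      · subst hki
        rw [Equiv.swap_apply_left, hvj]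
        simp [hTj, ha.1]
      by_cases hkj : k = j
      · subst hkj
        rw [Equiv.swap_apply_right, hvi]
        simp [hTi, ha.2, hab]
      · rw [Equiv.swap_apply_of_ne_of_ne hki hkj, hvk k hki hkj]
    by_cases heb : e = b
    · subst heb
      refine cnt_congr (Equiv.swap i j) (fun k => ?_)
      by_cases hki : k = i
      · subst hki
        rw [Equiv.swap_apply_left, hvj]
        simp [hTj, hb.2, Ne.symm hab]
      by_cases hkj : k = j
      · subst hkj
        rw [Equiv.swap_apply_right, hvi]
        simp [hTi, hb.1]
      · rw [Equiv.swap_apply_of_ne_of_ne hki hkj, hvk k hki hkj]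
    · refine cnt_congr (Equiv.refl _) (fun k => ?_)
      simp only [Equiv.refl_apply]
      by_cases hki : k = i
      · subst hki; rw [hvi]; simp [hTi, hea, heb]
      by_cases hkj : k = j
      · subst hkj; rw [hvj]; simp [hTj, hea, heb]
      · rw [hvk k hki hkj]

end Swap

section Main

variable {M : Matroid α} {H : Set α} {r s : ℕ}

lemma conn_lift {n : ℕ} {B B' : Fin (n + 1) → Set α}
    (h0 : B 0 = B' 0) (h0g : M.IsBase (B 0) ∧ ((B 0) \ H).ncard = 1)
    (hc : Conn M H (fun i => B (Fin.succ i)) (fun i => B' (Fin.succ i))) :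
    Conn M H B B' := by
  obtain ⟨ℓ, seq, hs0, hsl, hstep, hgood⟩ := hc
  refine ⟨ℓ, fun u => Fin.cases (B 0) (seq u), ?_, ?_, ?_, ?_⟩
  · funext i
    refine Fin.cases ?_ ?_ i
    · simp only [Fin.cases_zero]
    · intro m
      simp only [Fin.cases_succ]
      exact congrFun hs0 m
  · funext i
    refine Fin.cases ?_ ?_ i
    · simp only [Fin.cases_zero]; exact h0
    · intro m
      simp only [Fin.cases_succ]
      exact congrFun hsl m
  · intro t
    obtain ⟨i, j, hij, a, b, ha, hb, hi, hj, hbi, hbj, hk⟩ := hstep t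
    refine ⟨Fin.succ i, Fin.succ j, fun h => hij (Fin.succ_injective _ h), a, b,
      ?_, ?_, ?_, ?_, ?_, ?_, ?_⟩
    · simpa only [Fin.cases_succ] using ha
    · simpa only [Fin.cases_succ] using hb
    · simpa only [Fin.cases_succ] using hi
    · simpa only [Fin.cases_succ] using hj
    · simpa only [Fin.cases_succ] using hbi
    · simpa only [Fin.cases_succ] using hbj
    · intro k hki hkj
      induction k using Fin.cases with
      | zero => simp only [Fin.cases_zero]
      | succ m =>
        simp only [Fin.cases_succ]
        exact hk m (fun h => hki (congrArg Fin.succ h))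
          (fun h => hkj (congrArg Fin.succ h))
  · intro u i
    refine Fin.cases ?_ ?_ i
    · simp only [Fin.cases_zero]; exact h0g
    · intro m; simp only [Fin.cases_succ]; exact hgood u m

lemma symmdiff_sub_left {U V : Set α} {x y : α}
    (hxU : x ∈ U) (hyV : y ∈ V) (hyU : y ∉ U) (hxV : x ∉ V) :
    ((((U \ {x}) ∪ {y}) \ V) ∪ (V \ ((U \ {x}) ∪ {y}))) ⊆
      ((U \ V) ∪ (V \ U)) \ {y} := by
  intro e he
  simp only [Set.mem_union, Set.mem_diff, Set.mem_singleton_iff] at he ⊢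
  rcases he with ⟨he1 | he1, he2⟩ | ⟨he1, he2⟩
  · exact ⟨Or.inl ⟨he1.1, he2⟩, fun h => he2 (h ▸ hyV)⟩
  · exact absurd (he1 ▸ hyV) he2
  · push_neg at he2
    have hne : e ≠ y := he2.2
    have heU : e ∉ U := fun heU => hxV ((he2.1 heU) ▸ he1)
    exact ⟨Or.inr ⟨he1, heU⟩, hne⟩

lemma symmdiff_sub_right {U V : Set α} {x y : α}
    (hxV : x ∈ V) (hyU : y ∈ U) (hyV : y ∉ V) (hxU : x ∉ U) :
    ((U \ ((V \ {x}) ∪ {y})) ∪ (((V \ {x}) ∪ {y}) \ U)) ⊆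
      ((U \ V) ∪ (V \ U)) \ {y} := by
  intro e he
  simp only [Set.mem_union, Set.mem_diff, Set.mem_singleton_iff] at he ⊢
  rcases he with ⟨he1, he2⟩ | ⟨he1 | he1, he2⟩
  · push_neg at he2
    have hne : e ≠ y := he2.2
    have heV : e ∉ V := fun heV => hxU ((he2.1 heV) ▸ he1)
    exact ⟨Or.inl ⟨he1, heV⟩, hne⟩
  · exact ⟨Or.inr ⟨he1.1, he2⟩, fun h => he2 (h ▸ hyU)⟩
  · exact absurd (he1 ▸ hyU) he2

lemma measure_drop {D'' D : Set α} {c : α} {K : ℕ} (hDfin : D.Finite)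
    (hsub : D'' ⊆ D \ {c}) (hc : c ∈ D) (hDcard : D.ncard = K + 1) :
    D''.ncard ≤ K := by
  have h1 : D''.ncard ≤ (D \ {c}).ncard :=
    Set.ncard_le_ncard hsub (hDfin.diff)
  have h2 : (D \ {c}).ncard + 1 = D.ncard :=
    Set.ncard_diff_singleton_add_one hc hDfin
  omega

lemma conn_main (hr : HasRank M r) (hH : IsStressedP M r H) (hfin : M.E.Finite)
    (hHcard : r ≤ H.ncard) (hrs : r = s + 1) :
    ∀ (n : ℕ) (B B' : Fin n → Set α), GoodT M H B → GoodT M H B' →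
      (∀ e, cnt B e = cnt B' e) → Conn M H B B' := by
  intro n
  induction n with
  | zero =>
    intro B B' hB hB' _
    have hBB : B = B' := funext fun i => i.elim0
    rw [hBB]
    exact conn_refl hB'
  | succ n IH =>
    have haux : ∀ (K : ℕ) (B B' : Fin (n + 1) → Set α), GoodT M H B → GoodT M H B' →
        (∀ e, cnt B e = cnt B' e) → ((B 0 \ B' 0) ∪ (B' 0 \ B 0)).ncard ≤ K →
        Conn M H B B' := by
      intro K
      induction K with
      | zero =>
        intro B B' hB hB' hU hcard
        have hfinD : ((B 0 \ B' 0) ∪ (B' 0 \ B 0)).Finite :=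
          ((hfin.subset (hB 0).1.subset_ground).diff).union
            ((hfin.subset (hB' 0).1.subset_ground).diff)
        have hD : (B 0 \ B' 0) ∪ (B' 0 \ B 0) = ∅ :=
          (Set.ncard_eq_zero hfinD).mp (Nat.le_zero.mp hcard)
        rw [Set.union_empty_iff] at hD
        have h00 : B 0 = B' 0 :=
          subset_antisymm (Set.diff_eq_empty.mp hD.1) (Set.diff_eq_empty.mp hD.2)
        apply conn_lift h00 (hB 0)
        apply IH
        · intro i; exact hB i.succ
        · intro i; exact hB' i.succ
        · intro e
          have h1 := cnt_succ B e
          have h2 := cnt_succ B' e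
          have h3 := hU e
          rw [h00] at h1
          rw [h1, h2] at h3
          exact Nat.add_left_cancel h3
      | succ K IHK =>
        intro B B' hB hB' hU hcard
        by_cases hle : ((B 0 \ B' 0) ∪ (B' 0 \ B 0)).ncard ≤ K
        · exact IHK B B' hB hB' hU hle
        have hne : B 0 ≠ B' 0 := by
          intro h
          apply hle
          rw [h]
          simp
        have hfinB : ∀ i, (B i).Finite := fun i => hfin.subset (hB i).1.subset_ground
        have hfinB' : ∀ i, (B' i).Finite := fun i => hfin.subset (hB' i).1.subset_ground
        have hDfin : ((B 0 \ B' 0) ∪ (B' 0 \ B 0)).Finite :=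
          ((hfinB 0).diff).union ((hfinB' 0).diff)
        have hDcard : ((B 0 \ B' 0) ∪ (B' 0 \ B 0)).ncard = K + 1 := by omega
        by_cases hxeq : B 0 \ H = B' 0 \ H
        · -- the two tuples have the same element outside `H` in coordinate `0`;
          -- we use the key combinatorial lemma on the parts inside `H`
          have hSU : ∀ e, cnt (fun i => B i ∩ H) e = cnt (fun i => B' i ∩ H) e := by
            intro e
            by_cases heH : e ∈ H
            · have e1 : cnt (fun i => B i ∩ H) e = cnt B e :=
                cnt_congr (Equiv.refl _) (fun k => by simp [heH])
              have e2 : cnt (fun i => B' i ∩ H) e = cnt B' e :=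
                cnt_congr (Equiv.refl _) (fun k => by simp [heH])
              rw [e1, e2]; exact hU e
            · exact cnt_congr (Equiv.refl _) (fun k => by simp [heH])
          have h0card : (B 0 ∩ H).ncard = (B' 0 ∩ H).ncard := by
            rw [(good_parts hr hfin hrs (hB 0).1 (hB 0).2).2,
              (good_parts hr hfin hrs (hB' 0).1 (hB' 0).2).2]
          have h0ne : B 0 ∩ H ≠ B' 0 ∩ H := by
            intro h
            apply hne
            rw [← Set.inter_union_diff (B 0) H, ← Set.inter_union_diff (B' 0) H,
              h, hxeq]
          rcases key_lemma (fun i => (hfinB i).inter_of_left H)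
              (fun i => (hfinB' i).inter_of_left H) hSU h0card h0ne with
            ⟨j, c, a, hj0, hcY, hcSj, haX, haS'0⟩ | ⟨j, c, a, hj0, hcY, hcS'j, haX, haS0⟩
          · -- swap `a` and `c` between coordinates `0` and `j` of `B`
            have hcH : c ∈ H := hcSj.2
            have haH : a ∈ H := haX.1.2
            have ha' : a ∈ B 0 \ B j := ⟨haX.1.1, fun h => haX.2 ⟨h, haH⟩⟩
            have hb' : c ∈ B j \ B 0 := ⟨hcSj.1, fun h => hcY.2 ⟨h, hcH⟩⟩
            obtain ⟨B'', hstep, hG'', hcnt, hv0, hvj, hvk⟩ :=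
              swap_good hr hH hfin hHcard hrs hB (Ne.symm hj0) ha' hb'
                (iff_of_true haH hcH)
            have hsub : ((B'' 0 \ B' 0) ∪ (B' 0 \ B'' 0)) ⊆
                (((B 0 \ B' 0) ∪ (B' 0 \ B 0))) \ {c} := by
              rw [hv0]
              exact symmdiff_sub_left ha'.1 hcY.1.1 hb'.2
                (fun h => haS'0 ⟨h, haH⟩)
            have hcD : c ∈ (B 0 \ B' 0) ∪ (B' 0 \ B 0) := Or.inr ⟨hcY.1.1, hb'.2⟩
            refine Conn.head hstep hB (IHK B'' B' hG'' hB'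
              (fun e => (hcnt e).symm.trans (hU e))
              (measure_drop hDfin hsub hcD hDcard))
          · -- swap `a` and `c` between coordinates `0` and `j` of `B'`
            have hcH : c ∈ H := hcS'j.2
            have haH : a ∈ H := haX.1.2
            have ha' : a ∈ B' 0 \ B' j := ⟨haX.1.1, fun h => haX.2 ⟨h, haH⟩⟩
            have hb' : c ∈ B' j \ B' 0 := ⟨hcS'j.1, fun h => hcY.2 ⟨h, hcH⟩⟩
            obtain ⟨B''', hstep, hG''', hcnt, hv0, hvj, hvk⟩ :=
              swap_good hr hH hfin hHcard hrs hB' (Ne.symm hj0) ha' hb'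
                (iff_of_true haH hcH)
            have hsub : ((B 0 \ B''' 0) ∪ (B''' 0 \ B 0)) ⊆
                (((B 0 \ B' 0) ∪ (B' 0 \ B 0))) \ {c} := by
              rw [hv0]
              exact symmdiff_sub_right ha'.1 hcY.1.1 hb'.2
                (fun h => haS0 ⟨h, haH⟩)
            have hcD : c ∈ (B 0 \ B' 0) ∪ (B' 0 \ B 0) := Or.inl ⟨hcY.1.1, hb'.2⟩
            refine Conn.snoc (IHK B B''' hB hG'''
                (fun e => (hU e).trans (hcnt e))
                (measure_drop hDfin hsub hcD hDcard))
              (ExchStep.symm (fun i => (hB' i).1) hstep) hB'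
        · -- the elements outside `H` in coordinate `0` differ; swap them
          obtain ⟨x, hx⟩ := Set.ncard_eq_one.mp (hB 0).2
          obtain ⟨x', hx'⟩ := Set.ncard_eq_one.mp (hB' 0).2
          have hxx' : x ≠ x' := by
            rintro rfl
            exact hxeq (hx.trans hx'.symm)
          have hx'B'0 : x' ∈ B' 0 \ H := hx' ▸ rfl
          have hxB0 : x ∈ B 0 \ H := hx ▸ rfl
          have hx'B0 : x' ∉ B 0 := by
            intro h
            have : x' ∈ B 0 \ H := ⟨h, hx'B'0.2⟩
            rw [hx, Set.mem_singleton_iff] at this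
            exact hxx' this.symm
          obtain ⟨j, hjmem⟩ := cnt_exists (hU x' ▸ cnt_pos hx'B'0.1)
          have hj0 : j ≠ 0 := by
            rintro rfl
            exact hx'B0 hjmem
          have hBjH : B j \ H = {x'} := by
            obtain ⟨y, hy⟩ := Set.ncard_eq_one.mp (hB j).2
            have : x' ∈ B j \ H := ⟨hjmem, hx'B'0.2⟩
            rw [hy, Set.mem_singleton_iff] at this
            rw [hy, this]
          have hxBj : x ∉ B j := by
            intro h
            have : x ∈ B j \ H := ⟨h, hxB0.2⟩
            rw [hBjH, Set.mem_singleton_iff] at this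
            exact hxx' this
          have ha' : x ∈ B 0 \ B j := ⟨hxB0.1, hxBj⟩
          have hb' : x' ∈ B j \ B 0 := ⟨hjmem, hx'B0⟩
          obtain ⟨B'', hstep, hG'', hcnt, hv0, hvj, hvk⟩ :=
            swap_good hr hH hfin hHcard hrs hB (Ne.symm hj0) ha' hb'
              (iff_of_false hxB0.2 hx'B'0.2)
          have hxB'0 : x ∉ B' 0 := by
            intro h
            have : x ∈ B' 0 \ H := ⟨h, hxB0.2⟩
            rw [hx', Set.mem_singleton_iff] at this
            exact hxx' this
          have hsub : ((B'' 0 \ B' 0) ∪ (B' 0 \ B'' 0)) ⊆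
              (((B 0 \ B' 0) ∪ (B' 0 \ B 0))) \ {x'} := by
            rw [hv0]
            exact symmdiff_sub_left hxB0.1 hx'B'0.1 hx'B0 hxB'0
          have hcD : x' ∈ (B 0 \ B' 0) ∪ (B' 0 \ B 0) := Or.inr ⟨hx'B'0.1, hx'B0⟩
          refine Conn.head hstep hB (IHK B'' B' hG'' hB'
            (fun e => (hcnt e).symm.trans (hU e))
            (measure_drop hDfin hsub hcD hDcard))
    intro B B' hB hB' hU
    exact haux _ B B' hB hB' hU le_rfl

end Main

end Aux

/-- Two tuples of type-1 bases of `M` with the same multiset union are connected by an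
exchange sequence in `M` all of whose subsets are type-1 bases of `M`. -/
theorem type_one_exchange (M : Matroid α) (r : ℕ) (H : Set α)
    (hfin : M.E.Finite) (hr : HasRank M r) (hH : IsStressedP M r H)
    (hHcard : r ≤ H.ncard)
    (n : ℕ) (B B' : Fin n → Set α)
    (hB : ∀ i, M.IsBase (B i) ∧ ((B i) \ H).ncard = 1)
    (hB' : ∀ i, M.IsBase (B' i) ∧ ((B' i) \ H).ncard = 1)
    (hU : SameUnion B B') :
    ∃ (ℓ : ℕ) (seq : Fin (ℓ + 1) → Fin n → Set α),
      seq 0 = B ∧ seq (Fin.last ℓ) = B' ∧ IsExchSeq M seq ∧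
      ∀ (u : Fin (ℓ + 1)) (i : Fin n), M.IsBase (seq u i) ∧ ((seq u i) \ H).ncard = 1 := by
  cases n with
  | zero =>
    have hBB : B = B' := funext fun i => i.elim0
    exact ⟨0, fun _ => B, rfl, hBB ▸ rfl, fun t => t.elim0, fun u i => i.elim0⟩
  | succ m =>
    have hB0 := hB 0
    have hB0fin : (B 0).Finite := hfin.subset hB0.1.subset_ground
    cases r with
    | zero =>
      exfalso
      have h0 : (B 0).ncard = 0 := hr _ hB0.1
      have hBe : B 0 = ∅ := (Set.ncard_eq_zero hB0fin).mp h0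
      have := hB0.2
      rw [hBe] at this
      simp at this
    | succ s =>
      exact conn_main hr hH hfin hHcard rfl (m + 1) B B'
        (fun i => hB i) (fun i => hB' i) (fun e => hU e)

end WhitePaving
end

section
/- Let M be a matroid of rank r on a finite ground set E with a stressed hyperplane H of size at least r. Let X be a subset of H with |X| = r (a type-0 subset), and let Y be a basis of M with |Y \ H| ≥ 2. Let a ∈ Y \ H (so in particular a ∈ Y \ X). Then there exists s ∈ X \ Y (so s ∈ H) such that both (X \ {s}) ∪ {a} and (Y \ {a}) ∪ {s} are bases of M. -/
open Set

namespace WhitePaving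

variable {α : Type*}

lemma flat_closure (M : Matroid α) (S : Set α) : M.IsFlat (M.closure S) := by
  rw [Matroid.closure_def, sInter_eq_iInter]
  haveI : Nonempty ↑{F | M.IsFlat F ∧ S ∩ M.E ⊆ F} :=
    ⟨⟨M.E, M.ground_isFlat, inter_subset_right⟩⟩
  exact Matroid.IsFlat.iInter fun F => F.2.1

lemma base_of_indep_card (M : Matroid α) {r : ℕ} (hr : HasRank M r) (hfin : M.E.Finite)
    {I : Set α} (hI : M.Indep I) (hcard : I.ncard = r) : M.IsBase I := by
  obtain ⟨B, hB, hIB⟩ := hI.exists_isBase_superset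
  have hBfin : B.Finite := hfin.subset hB.subset_ground
  have : I = B := Set.eq_of_subset_of_ncard_le hIB (by rw [hr B hB, hcard]) hBfin
  rwa [this]

/-- Given a type-0 subset `X` and a basis `Y` of `M` of type at least 2, and
`a ∈ Y \ H`, there is `s ∈ X \ Y` such that both `(X \ {s}) ∪ {a}` and
`(Y \ {a}) ∪ {s}` are bases of `M`. -/
theorem type02_exchange (M : Matroid α) (r : ℕ) (H : Set α)
    (hfin : M.E.Finite) (hr : HasRank M r) (hH : IsStressedP M r H)
    (hHcard : r ≤ H.ncard)
    (X : Set α) (hXH : X ⊆ H) (hXcard : X.ncard = r)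
    (Y : Set α) (hY : M.IsBase Y) (hYty : 2 ≤ (Y \ H).ncard)
    (a : α) (ha : a ∈ Y \ H) :
    ∃ s ∈ X \ Y, M.IsBase ((X \ {s}) ∪ {a}) ∧ M.IsBase ((Y \ {a}) ∪ {s}) := by
  have hHE : H ⊆ M.E := hH.1.1.subset_ground
  have hXE : X ⊆ M.E := hXH.trans hHE
  have hXfin : X.Finite := hfin.subset hXE
  have hYfin : Y.Finite := hfin.subset hY.subset_ground
  have hXcirc : IsCircuitP M X := hH.2 X hXH hXcard
  have hXne : X.Nonempty := by
    rcases X.eq_empty_or_nonempty with h | h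
    · exact absurd (by rw [h]; exact M.empty_indep) hXcirc.2.1
    · exact h
  have hrpos : 1 ≤ r := by
    rw [← hXcard]; exact (Set.ncard_pos hXfin).mpr hXne
  have haX : a ∉ X := fun h => ha.2 (hXH h)
  -- the closure of X is H
  have hclXH : M.closure X ⊆ H := by
    have := M.closure_subset_closure hXH
    rwa [hH.1.1.closure] at this
  have hHclX : H ⊆ M.closure X := by
    intro h hh
    by_contra hcl
    obtain ⟨s, hs⟩ := hXne
    have hXd : M.Indep (X \ {s}) := hXcirc.2.2 s hs
    have hns : h ∉ M.closure (X \ {s}) :=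
      fun hc => hcl (M.closure_subset_closure diff_subset hc)
    have hhX : h ∉ X := fun hx => hcl (M.subset_closure X hXE hx)
    have hins : M.Indep (insert h (X \ {s})) := by
      rw [hXd.insert_indep_iff_of_notMem (by simp [hhX])]
      exact ⟨hHE hh, hns⟩
    have hsubH : insert h (X \ {s}) ⊆ H :=
      insert_subset hh (diff_subset.trans hXH)
    have hcard' : (insert h (X \ {s})).ncard = r := by
      rw [Set.ncard_insert_of_notMem (by simp [hhX]) hXfin.diff,
        Set.ncard_diff_singleton_of_mem hs, hXcard]
      omega
    exact (hH.2 _ hsubH hcard').2.1 hins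
  have hYd : M.Indep (Y \ {a}) := hY.indep.subset diff_subset
  -- there exists s ∈ X \ Y outside the closure of Y \ {a}
  have key : ¬ (X \ Y ⊆ M.closure (Y \ {a})) := by
    intro hsub
    have hXsub : X ⊆ M.closure (Y \ {a}) := by
      intro x hx
      by_cases hxY : x ∈ Y
      · exact M.subset_closure (Y \ {a}) (diff_subset.trans hY.subset_ground)
          ⟨hxY, fun he => haX (mem_singleton_iff.mp he ▸ hx)⟩
      · exact hsub ⟨hx, hxY⟩
    have hHF : H ⊆ M.closure (Y \ {a}) := by
      refine hHclX.trans ?_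
      have := M.closure_subset_closure hXsub
      rwa [M.closure_closure] at this
    obtain ⟨b, hbYH, hba⟩ := Set.exists_ne_of_one_lt_ncard (show 1 < (Y \ H).ncard by omega) a
    have hbcl : b ∈ M.closure (Y \ {a}) :=
      M.subset_closure (Y \ {a}) (diff_subset.trans hY.subset_ground) ⟨hbYH.1, by simp [hba]⟩
    have hssub : H ⊂ M.closure (Y \ {a}) :=
      ⟨hHF, fun hc => hbYH.2 (hc hbcl)⟩
    have hEq : M.closure (Y \ {a}) = M.E := hH.1.2.2 _ (flat_closure M _) hssub
    have hnotcl : a ∉ M.closure (Y \ {a}) := by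
      rw [hYd.notMem_closure_iff_of_notMem (by simp) (hY.subset_ground ha.1)]
      rw [insert_diff_singleton, insert_eq_of_mem ha.1]
      exact hY.indep
    rw [hEq] at hnotcl
    exact hnotcl (hY.subset_ground ha.1)
  obtain ⟨s, hsXY, hscl⟩ := not_subset.mp key
  have hsX : s ∈ X := hsXY.1
  have hXd : M.Indep (X \ {s}) := hXcirc.2.2 s hsX
  refine ⟨s, hsXY, ?_, ?_⟩
  · -- (X \ {s}) ∪ {a} is a base
    rw [union_singleton]
    have hacl : a ∉ M.closure (X \ {s}) := fun hc =>
      ha.2 (hclXH (M.closure_subset_closure diff_subset hc))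
    have hind : M.Indep (insert a (X \ {s})) := by
      rw [hXd.insert_indep_iff_of_notMem (by simp [haX])]
      exact ⟨hY.subset_ground ha.1, hacl⟩
    refine base_of_indep_card M hr hfin hind ?_
    rw [Set.ncard_insert_of_notMem (by simp [haX]) hXfin.diff,
      Set.ncard_diff_singleton_of_mem hsX, hXcard]
    omega
  · -- (Y \ {a}) ∪ {s} is a base
    rw [union_singleton]
    have hsY : s ∉ Y \ {a} := fun h => hsXY.2 h.1
    have hind : M.Indep (insert s (Y \ {a})) := by
      rw [hYd.insert_indep_iff_of_notMem hsY]
      exact ⟨hXE hsX, hscl⟩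
    refine base_of_indep_card M hr hfin hind ?_
    rw [Set.ncard_insert_of_notMem hsY hYfin.diff,
      Set.ncard_diff_singleton_of_mem ha.1, hr Y hY]
    omega

end WhitePaving
end

section
/- Let M be a matroid of rank r on a finite ground set E and let H be a stressed hyperplane of M. Then the collection consisting of the bases of M together with all subsets of H of size r is the collection of bases of a matroid on E (the relaxation of M at H). -/
open Set

namespace WhitePaving

variable {α : Type*}

lemma flat_closure_aux (M : Matroid α) (X : Set α) : M.IsFlat (M.closure X) := by
  rw [Matroid.closure_def]
  have hne : Nonempty ↑{F | M.IsFlat F ∧ X ∩ M.E ⊆ F} :=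
    ⟨⟨M.E, M.ground_isFlat, Set.inter_subset_right⟩⟩
  rw [Set.sInter_eq_iInter]
  exact Matroid.IsFlat.iInter (fun F => F.2.1)

/-- The bases of `M` together with the size-`r` subsets of a stressed hyperplane `H`
form the bases of a matroid on the same ground set (the relaxation of `M` at `H`). -/
theorem relaxation_exists (M : Matroid α) (r : ℕ) (H : Set α)
    (hfin : M.E.Finite) (hr : HasRank M r) (hH : IsStressedP M r H) :
    ∃ Mt : Matroid α, IsRelaxation M Mt r H := by
  classical
  have hHE : H ⊆ M.E := hH.1.1.subset_ground
  have hfinH : H.Finite := hfin.subset hHE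
  -- every independent set has at most r elements
  have hile : ∀ I, M.Indep I → I.ncard ≤ r := by
    intro I hI
    obtain ⟨B, hB, hIB⟩ := hI.exists_isBase_superset
    rw [← hr B hB]
    exact Set.ncard_le_ncard hIB (hfin.subset hB.subset_ground)
  -- proper subsets of r-subsets of H are independent
  have hpsub : ∀ X J, X ⊆ J → X ≠ J → J ⊆ H → J.ncard = r → M.Indep X := by
    intro X J hXJ hne hJH hJr
    obtain ⟨x, hxJ, hxX⟩ : ∃ x ∈ J, x ∉ X := by
      by_contra h
      push_neg at h
      exact hne (hXJ.antisymm h)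
    have hC := (hH.2 J hJH hJr).2.2 x hxJ
    exact hC.subset (fun y hy => ⟨hXJ hy, fun hyx => hxX (hyx ▸ hy)⟩)
  set Ind : Set α → Prop := fun X => M.Indep X ∨ (X ⊆ H ∧ X.ncard = r) with hInd
  have hsubcl : ∀ ⦃I J : Set α⦄, Ind J → I ⊆ J → Ind I := by
    intro I J hJ hIJ
    rcases hJ with hJ | ⟨hJH, hJr⟩
    · exact Or.inl (hJ.subset hIJ)
    · by_cases h : I = J
      · exact Or.inr ⟨h ▸ hJH, h ▸ hJr⟩
      · exact Or.inl (hpsub I J hIJ h hJH hJr)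
  have hsg : ∀ ⦃I : Set α⦄, Ind I → I ⊆ M.E := by
    intro I hI
    rcases hI with hI | ⟨hIH, _⟩
    · exact hI.subset_ground
    · exact hIH.trans hHE
  -- augmentation
  have haug : ∀ ⦃I J : Set α⦄, Ind I → Ind J → I.ncard < J.ncard →
      ∃ e ∈ J, e ∉ I ∧ Ind (insert e I) := by
    intro I J hI hJ hlt
    have hfinI : I.Finite := hfin.subset (hsg hI)
    have hfinJ : J.Finite := hfin.subset (hsg hJ)
    -- M-augmentation helper
    have Maug : ∀ I' J' : Set α, M.Indep I' → M.Indep J' → I'.ncard < J'.ncard →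
        ∃ e ∈ J', e ∉ I' ∧ M.Indep (insert e I') := by
      intro I' J' hI' hJ' hlt'
      have : I'.encard < J'.encard := by
        rw [← (hfin.subset hI'.subset_ground).cast_ncard_eq,
          ← (hfin.subset hJ'.subset_ground).cast_ncard_eq]
        exact_mod_cast hlt'
      obtain ⟨e, he, hei⟩ := hI'.augment hJ' this
      exact ⟨e, he.1, he.2, hei⟩
    rcases hJ with hJ | ⟨hJH, hJr⟩
    · rcases hI with hI | ⟨_, hIr⟩
      · obtain ⟨e, heJ, heI, hei⟩ := Maug I J hI hJ hlt
        exact ⟨e, heJ, heI, Or.inl hei⟩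
      · exact absurd (hlt.trans_le (hile J hJ)) (by omega)
    · have hIi : M.Indep I := by
        rcases hI with hI | ⟨_, hIr⟩
        · exact hI
        · omega
      have hIlt : I.ncard < r := hJr ▸ hlt
      by_cases hsmall : I.ncard + 1 < r
      · -- use J minus a point
        obtain ⟨x, hxJ, hxI⟩ : ∃ x ∈ J, x ∉ I := by
          by_contra h
          push_neg at h
          exact absurd (Set.ncard_le_ncard h hfinI) (by omega)
        have hJx : M.Indep (J \ {x}) := (hH.2 J hJH hJr).2.2 x hxJ
        have hJxcard : (J \ {x}).ncard = r - 1 := by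
          rw [Set.ncard_diff_singleton_of_mem hxJ, hJr]
        obtain ⟨e, heJ, heI, hei⟩ := Maug I (J \ {x}) hIi hJx (by omega)
        exact ⟨e, heJ.1, heI, Or.inl hei⟩
      · have hIr1 : I.ncard + 1 = r := by omega
        by_cases hIH : I ⊆ H
        · obtain ⟨e, heJ, heI⟩ : ∃ e ∈ J, e ∉ I := by
            by_contra h
            push_neg at h
            exact absurd (Set.ncard_le_ncard h hfinI) (by omega)
          refine ⟨e, heJ, heI, Or.inr ⟨Set.insert_subset (hJH heJ) hIH, ?_⟩⟩
          rw [Set.ncard_insert_of_notMem heI hfinI, hIr1]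
        · by_contra hcon
          push_neg at hcon
          -- J ⊆ closure I
          have hJcl : J ⊆ M.closure I := by
            intro e heJ
            by_cases heI : e ∈ I
            · exact M.subset_closure I (hsg (Or.inl hIi)) heI
            · have hni : ¬ M.Indep (insert e I) := by
                intro h
                rcases hcon e heJ heI with h'
                exact h' (Or.inl h)
              rcases (hIi.insert_indep_iff_of_notMem heI).not.mp hni with h'
              simp only [Set.mem_diff, not_and, not_not] at h'
              exact h' (hHE (hJH heJ))
          -- H ⊆ closure J
          have hHcl : H ⊆ M.closure J := by
            intro h hhH
            by_cases hhJ : h ∈ J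
            · exact M.subset_closure J (hJH.trans hHE) hhJ
            · obtain ⟨x, hxJ⟩ : J.Nonempty := by
                rw [← Set.ncard_pos hfinJ] at *
                omega
              have hJx : M.Indep (J \ {x}) := (hH.2 J hJH hJr).2.2 x hxJ
              have hhJx : h ∉ J \ {x} := fun h' => hhJ h'.1
              have hJ'H : insert h (J \ {x}) ⊆ H :=
                Set.insert_subset hhH ((Set.diff_subset).trans hJH)
              have hJ'r : (insert h (J \ {x})).ncard = r := by
                rw [Set.ncard_insert_of_notMem hhJx (hfinJ.subset Set.diff_subset),
                  Set.ncard_diff_singleton_of_mem hxJ, hJr]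
                omega
              have hdep : ¬ M.Indep (insert h (J \ {x})) := (hH.2 _ hJ'H hJ'r).2.1
              have : h ∈ M.closure (J \ {x}) := by
                rcases (hJx.insert_indep_iff_of_notMem hhJx).not.mp hdep with h'
                simp only [Set.mem_diff, not_and, not_not] at h'
                exact h' (hHE hhH)
              exact M.closure_subset_closure Set.diff_subset this
          have hHclI : H ⊆ M.closure I := by
            refine hHcl.trans ?_
            have := M.closure_subset_closure_of_subset_closure hJcl
            exact this
          -- closure I is a flat strictly containing H, hence equals M.E
          obtain ⟨y, hyI, hyH⟩ : ∃ y ∈ I, y ∉ H := by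
            by_contra h
            push_neg at h
            exact hIH h
          have hssub : H ⊂ M.closure I := by
            refine ⟨hHclI, fun h => hyH (h (M.subset_closure I hIi.subset_ground hyI))⟩
          have hclE : M.closure I = M.E :=
            hH.1.2.2 _ (flat_closure_aux M I) hssub
          have hbase : M.IsBase I := hIi.isBase_of_ground_subset_closure hclE.symm.subset
          have := hr I hbase
          omega
  set Mt : Matroid α := (IndepMatroid.ofFinite hfin Ind
    (Or.inl M.empty_indep) hsubcl haug hsg).matroid with hMt
  have hMtE : Mt.E = M.E := rfl
  have hMtInd : ∀ X, Mt.Indep X ↔ Ind X := fun X => by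
    simp [hMt, IndepMatroid.ofFinite]
  -- an Ind set of size r exists
  obtain ⟨B0, hB0⟩ := M.exists_isBase
  have hB0r : B0.ncard = r := hr B0 hB0
  -- base characterization
  have hbase_iff : ∀ B, Mt.IsBase B ↔ Ind B ∧ B.ncard = r := by
    intro B
    constructor
    · intro hB
      have hBi : Ind B := (hMtInd B).mp hB.indep
      refine ⟨hBi, ?_⟩
      have hle : B.ncard ≤ r := by
        rcases hBi with h | ⟨_, h⟩
        · exact hile B h
        · omega
      by_contra hne
      have hlt : B.ncard < r := lt_of_le_of_ne hle hne
      obtain ⟨e, heB0, heB, hei⟩ := haug hBi (Or.inl hB0.indep) (by omega)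
      have : B = insert e B := hB.eq_of_subset_indep ((hMtInd _).mpr hei) (Set.subset_insert _ _)
      exact heB (this ▸ Set.mem_insert e B)
    · rintro ⟨hBi, hBr⟩
      obtain ⟨B', hB', hBB'⟩ := ((hMtInd B).mpr hBi).exists_isBase_superset
      have hB'i : Ind B' := (hMtInd B').mp hB'.indep
      have hB'le : B'.ncard ≤ r := by
        rcases hB'i with h | ⟨_, h⟩
        · exact hile B' h
        · omega
      have : B = B' := Set.eq_of_subset_of_ncard_le hBB' (by omega) (hfin.subset (hsg hB'i))
      exact this ▸ hB'
  refine ⟨Mt, hMtE, fun B => ?_⟩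
  rw [hbase_iff B]
  constructor
  · rintro ⟨hBi, hBr⟩
    rcases hBi with h | h
    · obtain ⟨B', hB', hBB'⟩ := h.exists_isBase_superset
      have : B = B' := Set.eq_of_subset_of_ncard_le hBB'
        (by rw [hr B' hB', hBr]) (hfin.subset hB'.subset_ground)
      exact Or.inl (this ▸ hB')
    · exact Or.inr h
  · rintro (h | h)
    · exact ⟨Or.inl h.indep, hr B h⟩
    · exact ⟨Or.inr h, h.2⟩

end WhitePaving
end

section
/- Let M be a matroid of rank r on a finite ground set E with a stressed hyperplane H of size at least r. Let Y be a basis of M with |Y \ H| ≥ 2 and let s ∈ E \ Y. Then the fundamental circuit C(Y,s) of Y with respect to s (the unique circuit of M contained in Y ∪ {s}) is not contained in H; in particular there exists an element a ∈ C(Y,s) \ H. -/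
open Set

namespace WhitePaving

variable {α : Type*}

/-- Every dependent subset of a finite ground set contains a circuit. -/
lemma exists_circuit_subset (M : Matroid α) (hfin : M.E.Finite) {D : Set α}
    (hDE : D ⊆ M.E) (hdep : ¬ M.Indep D) : ∃ C ⊆ D, IsCircuitP M C := by
  set T : Set ℕ := {k | ∃ C, C ⊆ D ∧ ¬ M.Indep C ∧ C.ncard = k} with hT
  have hne : T.Nonempty := ⟨D.ncard, D, Subset.rfl, hdep, rfl⟩
  obtain ⟨C, hCD, hCdep, hCcard⟩ := Nat.sInf_mem hne
  refine ⟨C, hCD, hCD.trans hDE, hCdep, fun x hx => ?_⟩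
  by_contra hxdep
  have hCfin : C.Finite := hfin.subset (hCD.trans hDE)
  have : (C \ {x}).ncard ∈ T := ⟨C \ {x}, (diff_subset).trans hCD, hxdep, rfl⟩
  have h1 := Nat.sInf_le this
  have h2 := Set.ncard_diff_singleton_lt_of_mem hx hCfin
  omega

lemma circuit_mem_closure {M : Matroid α} {C : Set α} (hC : IsCircuitP M C) {e : α}
    (he : e ∈ C) : e ∈ M.closure (C \ {e}) := by
  have hI : M.Indep (C \ {e}) := hC.2.2 e he
  have hdep : M.Dep (insert e (C \ {e})) := by
    rw [Set.insert_diff_singleton, Set.insert_eq_of_mem he]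
    exact ⟨hC.2.1, hC.1⟩
  exact (hI.insert_dep_iff.mp hdep).1

/-- If `Y` is a basis of `M` of type at least 2 and `s ∈ M.E \ Y`, then the unique
circuit of `M` contained in `Y ∪ {s}` (the fundamental circuit `C(Y, s)`) is not
contained in the stressed hyperplane `H`; in particular it has an element outside
of `H`. -/
theorem fundamental_circuit_not_in_hyperplane (M : Matroid α) (r : ℕ) (H : Set α)
    (hfin : M.E.Finite) (hr : HasRank M r) (hH : IsStressedP M r H)
    (hHcard : r ≤ H.ncard)
    (Y : Set α) (hY : M.IsBase Y) (hYty : 2 ≤ (Y \ H).ncard)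
    (s : α) (hs : s ∈ M.E \ Y) :
    (∃! C : Set α, IsCircuitP M C ∧ C ⊆ insert s Y) ∧
    ∀ C : Set α, IsCircuitP M C → C ⊆ insert s Y → (¬ C ⊆ H ∧ ∃ a ∈ C, a ∉ H) := by
  -- s is not in Y
  obtain ⟨hsE, hsY⟩ := hs
  have hYfin : Y.Finite := hfin.subset hY.subset_ground
  have hins_sub : insert s Y ⊆ M.E := insert_subset hsE hY.subset_ground
  have hins_dep : ¬ M.Indep (insert s Y) := by
    intro h
    exact hsY (hY.eq_of_subset_indep h (subset_insert s Y) ▸ mem_insert s Y)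
  -- every circuit in insert s Y contains s
  have hmem_s : ∀ C : Set α, IsCircuitP M C → C ⊆ insert s Y → s ∈ C := by
    intro C hC hCsub
    by_contra hsC
    exact hC.2.1 (hY.indep.subset (fun x hx => ((hCsub hx).resolve_left
      (fun h => hsC (h ▸ hx)))))
  -- existence
  obtain ⟨C₀, hC₀sub, hC₀⟩ := exists_circuit_subset M hfin hins_sub hins_dep
  -- uniqueness
  have huniq : ∀ C₁ C₂ : Set α, IsCircuitP M C₁ → C₁ ⊆ insert s Y →
      IsCircuitP M C₂ → C₂ ⊆ insert s Y → C₁ ⊆ C₂ := by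
    intro C₁ C₂ h₁ h₁s h₂ h₂s
    intro x hx
    by_contra hx₂
    have hxs : x ≠ s := fun h => hx₂ (h ▸ hmem_s C₂ h₂ h₂s)
    have hxY : x ∈ Y := ((h₁s hx).resolve_left hxs)
    -- s ∈ closure (Y \ {x}) since C₂ \ {s} ⊆ Y \ {x}
    have hscl : s ∈ M.closure (Y \ {x}) := by
      have := circuit_mem_closure h₂ (hmem_s C₂ h₂ h₂s)
      refine M.closure_subset_closure ?_ this
      intro y hy
      exact ⟨((h₂s hy.1).resolve_left hy.2), fun h => hx₂ ((h : y = x) ▸ hy.1)⟩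
    -- x ∈ closure (C₁ \ {x}) ⊆ closure (insert s (Y \ {x})) = closure (Y \ {x})
    have hxcl : x ∈ M.closure (Y \ {x}) := by
      have h1 := circuit_mem_closure h₁ hx
      have hsub : C₁ \ {x} ⊆ insert s (Y \ {x}) := by
        intro y hy
        rcases h₁s hy.1 with h | h
        · exact Or.inl h
        · exact Or.inr ⟨h, hy.2⟩
      have := M.closure_subset_closure hsub h1
      rwa [Matroid.closure_insert_eq_of_mem_closure hscl] at this
    exact hY.indep.notMem_closure_sdiff_of_mem hxY hxcl
  have hEq : ∀ C₁ C₂ : Set α, IsCircuitP M C₁ → C₁ ⊆ insert s Y →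
      IsCircuitP M C₂ → C₂ ⊆ insert s Y → C₁ = C₂ := fun C₁ C₂ a b c d =>
    Subset.antisymm (huniq C₁ C₂ a b c d) (huniq C₂ C₁ c d a b)
  -- main part
  have hmain : ∀ C : Set α, IsCircuitP M C → C ⊆ insert s Y → ¬ C ⊆ H := by
    intro C hC hCsub hCH
    have hsC := hmem_s C hC hCsub
    have hCE : C ⊆ M.E := hC.1
    have hCfin : C.Finite := hfin.subset hCE
    have hHE : H ⊆ M.E := hH.1.1.2
    have hHfin : H.Finite := hfin.subset hHE
    -- card bound
    have hYr : Y.ncard = r := hr Y hY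
    have hsplit : (Y ∩ H).ncard + (Y \ H).ncard = r := by
      rw [← hYr]
      exact Set.ncard_inter_add_ncard_diff_eq_ncard Y H hYfin
    have hCsubY : C \ {s} ⊆ Y ∩ H := by
      intro y hy
      exact ⟨((hCsub hy.1).resolve_left hy.2), hCH hy.1⟩
    have hCcard : C.ncard ≤ (Y ∩ H).ncard + 1 := by
      have h1 : C.ncard ≤ (C \ {s}).ncard + 1 := by
        rw [Set.ncard_diff_singleton_add_one hsC hCfin]
      exact h1.trans (Nat.add_le_add_right
        (Set.ncard_le_ncard hCsubY (hYfin.inter_of_left H)) 1)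
    have hClt : C.ncard < r := by omega
    -- extend C to an r-subset of H
    obtain ⟨S, hCS, hSH, hScard⟩ :=
      Set.exists_subsuperset_card_eq hCH (le_of_lt hClt) hHcard
    have hScirc : IsCircuitP M S := hH.2 S hSH hScard
    have hssub : C ⊂ S := by
      refine ⟨hCS, fun h => ?_⟩
      have := Set.ncard_le_ncard h hCfin
      omega
    obtain ⟨x, hxS, hxC⟩ := Set.exists_of_ssubset hssub
    exact hC.2.1 ((hScirc.2.2 x hxS).subset (fun y hy => ⟨hCS hy, fun h => hxC (h ▸ hy)⟩))
  refine ⟨⟨C₀, ⟨hC₀, hC₀sub⟩, fun C hC => hEq C C₀ hC.1 hC.2 hC₀ hC₀sub⟩, ?_⟩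
  intro C hC hCsub
  have h := hmain C hC hCsub
  exact ⟨h, not_subset.mp h⟩


end WhitePaving
end

section
/- White's conjecture holds for uniform matroids: let U_{r,E} be the uniform matroid of rank r on a finite ground set E (whose bases are exactly the subsets of E of size r). Then any two tuples (B_1,…,B_n) and (B'_1,…,B'_n) of size-r subsets of E with the same multiset union are connected by an exchange sequence in U_{r,E}. -/
open Set

namespace WhitePaving

variable {α : Type*}

-- ### auxiliary material

def Inv (N : Matroid α) (r : ℕ) {n : ℕ} (B : Fin n → Set α) : Prop :=
  ∀ i, B i ⊆ N.E ∧ (B i).ncard = r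

lemma sameUnion_refl {n : ℕ} (B : Fin n → Set α) : SameUnion B B := fun _ => rfl

lemma sameUnion_symm {n : ℕ} {B B' : Fin n → Set α} (h : SameUnion B B') :
    SameUnion B' B := fun e => (h e).symm

lemma sameUnion_trans {n : ℕ} {B B' B'' : Fin n → Set α} (h : SameUnion B B')
    (h' : SameUnion B' B'') : SameUnion B B'' := fun e => (h e).trans (h' e)

lemma exchConnected_of_rtg {N : Matroid α} {n : ℕ} {B B' : Fin n → Set α}
    (h : Relation.ReflTransGen (ExchStep N) B B') : ExchConnected N B B' := by
  induction h using Relation.ReflTransGen.head_induction_on with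
  | refl => exact ⟨0, fun _ => B', rfl, rfl, fun t => t.elim0⟩
  | head hstep _ ih =>
    obtain ⟨ℓ, seq, h0, hl, hs⟩ := ih
    rename_i C D _
    refine ⟨ℓ + 1, Fin.cons C seq, by simp, ?_, ?_⟩
    · rw [← Fin.succ_last, Fin.cons_succ, hl]
    · intro t
      induction t using Fin.cases with
      | zero =>
        simpa [Fin.cons_succ, h0] using hstep
      | succ s =>
        rw [← Fin.succ_castSucc, Fin.cons_succ, Fin.cons_succ]
        exact hs s

open scoped Classical in
lemma natCard_mem_eq_filter {n : ℕ} (B : Fin n → Set α) (e : α) :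
    Nat.card {i : Fin n // e ∈ B i} =
      (Finset.univ.filter (fun i => e ∈ B i)).card := by
  classical
  simp [Nat.card_eq_fintype_card, Fintype.card_subtype]

lemma exists_mem_of_sameUnion {n : ℕ} {B B' : Fin n → Set α} (h : SameUnion B B')
    {e : α} {i : Fin n} (he : e ∈ B' i) : ∃ j, e ∈ B j := by
  have h1 : 0 < Nat.card {k : Fin n // e ∈ B' k} :=
    Nat.card_pos_iff.mpr ⟨⟨i, he⟩, inferInstance⟩
  rw [← h e] at h1
  obtain ⟨⟨j, hj⟩⟩ := Nat.card_pos_iff.mp h1 |>.1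
  exact ⟨j, hj⟩

lemma exists_not_mem_of_sameUnion {n : ℕ} {B B' : Fin n → Set α} (h : SameUnion B B')
    {e : α} {i : Fin n} (he : e ∉ B' i) : ∃ j, e ∉ B j := by
  classical
  by_contra hc
  push_neg at hc
  have h1 : Nat.card {k : Fin n // e ∈ B k} = n := by
    rw [natCard_mem_eq_filter]
    rw [Finset.filter_true_of_mem (fun k _ => hc k)]
    simp
  have h2 : (Finset.univ.filter (fun k => e ∈ B' k)).card = Fintype.card (Fin n) := by
    rw [← natCard_mem_eq_filter, ← h e, h1, Fintype.card_fin]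
  have h3 := Finset.eq_univ_of_card _ h2
  have hi : i ∈ Finset.univ.filter (fun k => e ∈ B' k) := by
    rw [h3]; exact Finset.mem_univ i
  exact he (Finset.mem_filter.mp hi).2

/-- The new tuple after exchanging `a` (out of coordinate `i`) and `b` (out of `j`). -/
def swapped {n : ℕ} (B : Fin n → Set α) (i j : Fin n) (a b : α) : Fin n → Set α :=
  Function.update (Function.update B i ((B i \ {a}) ∪ {b})) j ((B j \ {b}) ∪ {a})

lemma swapped_apply_i {n : ℕ} {B : Fin n → Set α} {i j : Fin n} (hij : i ≠ j) (a b : α) :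
    swapped B i j a b i = (B i \ {a}) ∪ {b} := by
  simp [swapped, Function.update_of_ne hij]

lemma swapped_apply_j {n : ℕ} {B : Fin n → Set α} {i j : Fin n} (a b : α) :
    swapped B i j a b j = (B j \ {b}) ∪ {a} := by
  simp [swapped]

lemma swapped_apply_other {n : ℕ} {B : Fin n → Set α} {i j k : Fin n}
    (hki : k ≠ i) (hkj : k ≠ j) (a b : α) : swapped B i j a b k = B k := by
  simp [swapped, Function.update_of_ne hki, Function.update_of_ne hkj]

lemma sameUnion_swapped {n : ℕ} {B : Fin n → Set α} {i j : Fin n} (hij : i ≠ j)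
    {a b : α} (ha : a ∈ B i \ B j) (hb : b ∈ B j \ B i) :
    SameUnion B (swapped B i j a b) := by
  intro e
  have hab : a ≠ b := fun h => hb.2 (h ▸ ha.1)
  by_cases hea : e = a
  · subst hea
    refine Nat.card_congr ((Equiv.swap i j).subtypeEquiv fun k => ?_)
    rcases eq_or_ne k i with rfl | hki
    · simp [Equiv.swap_apply_left, swapped_apply_j, ha.1, ha.2]
    rcases eq_or_ne k j with rfl | hkj
    · simp [Equiv.swap_apply_right, swapped_apply_i hij, ha.1, ha.2, hab]
    · rw [Equiv.swap_apply_of_ne_of_ne hki hkj, swapped_apply_other hki hkj]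
  by_cases heb : e = b
  · subst heb
    refine Nat.card_congr ((Equiv.swap i j).subtypeEquiv fun k => ?_)
    rcases eq_or_ne k i with rfl | hki
    · simp [Equiv.swap_apply_left, swapped_apply_j, hb.1, hb.2, hab.symm]
    rcases eq_or_ne k j with rfl | hkj
    · simp [Equiv.swap_apply_right, swapped_apply_i hij, hb.1, hb.2]
    · rw [Equiv.swap_apply_of_ne_of_ne hki hkj, swapped_apply_other hki hkj]
  · refine Nat.card_congr (Equiv.subtypeEquivRight fun k => ?_)
    rcases eq_or_ne k i with rfl | hki
    · simp [swapped_apply_i hij, hea, heb]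
    rcases eq_or_ne k j with rfl | hkj
    · simp [swapped_apply_j, hea, heb]
    · rw [swapped_apply_other hki hkj]

section WithMatroid

variable {N : Matroid α} {r : ℕ} (hfin : N.E.Finite)
  (hU : ∀ B : Set α, N.IsBase B ↔ (B ⊆ N.E ∧ B.ncard = r))

include hfin hU

lemma swap_base {S : Set α} (hS : S ⊆ N.E) (hcard : S.ncard = r) {a b : α}
    (haS : a ∈ S) (hbS : b ∉ S) (hbE : b ∈ N.E) : N.IsBase ((S \ {a}) ∪ {b}) := by
  have hSfin : S.Finite := hfin.subset hS
  rw [hU]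
  constructor
  · exact union_subset (diff_subset.trans hS) (singleton_subset_iff.mpr hbE)
  · have hr : 0 < S.ncard := (Set.ncard_pos hSfin).mpr ⟨a, haS⟩
    rw [union_singleton,
      Set.ncard_insert_of_notMem (by simp [hbS]) hSfin.diff,
      Set.ncard_diff_singleton_of_mem haS, hcard]
    omega

lemma exists_exchStep {n : ℕ} {B : Fin n → Set α} (hB : Inv N r B) {i j : Fin n}
    (hij : i ≠ j) {a b : α} (ha : a ∈ B i \ B j) (hb : b ∈ B j \ B i) :
    ExchStep N B (swapped B i j a b) ∧ Inv N r (swapped B i j a b) ∧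
      SameUnion B (swapped B i j a b) := by
  have hBi := hB i
  have hBj := hB j
  have base_i : N.IsBase ((B i \ {a}) ∪ {b}) :=
    swap_base hfin hU hBi.1 hBi.2 ha.1 hb.2 ((hB j).1 hb.1)
  have base_j : N.IsBase ((B j \ {b}) ∪ {a}) :=
    swap_base hfin hU hBj.1 hBj.2 hb.1 ha.2 ((hB i).1 ha.1)
  refine ⟨⟨i, j, hij, a, b, ha, hb, swapped_apply_i hij a b, swapped_apply_j a b,
      by rw [swapped_apply_i hij]; exact base_i,
      by rw [swapped_apply_j]; exact base_j,
      fun k hki hkj => swapped_apply_other hki hkj a b⟩, ?_, sameUnion_swapped hij ha hb⟩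
  intro k
  rcases eq_or_ne k i with rfl | hki
  · rw [swapped_apply_i hij]; exact ((hU _).mp base_i).imp id id
  rcases eq_or_ne k j with rfl | hkj
  · rw [swapped_apply_j]; exact ((hU _).mp base_j).imp id id
  · rw [swapped_apply_other hki hkj]; exact hB k

end WithMatroid

lemma diff_swap_eq {s t : Set α} {a b : α} (hb : b ∉ t) :
    t \ ((s \ {b}) ∪ {a}) = (t \ s) \ {a} := by
  ext x
  simp only [mem_diff, mem_union, mem_singleton_iff]
  constructor
  · rintro ⟨hxt, hx⟩
    push_neg at hx
    obtain ⟨hx1, hx2⟩ := hx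
    exact ⟨⟨hxt, fun hxs => hb ((hx1 hxs) ▸ hxt)⟩, hx2⟩
  · rintro ⟨⟨hxt, hxs⟩, hxa⟩
    exact ⟨hxt, by push_neg; exact ⟨fun h => absurd h hxs, hxa⟩⟩

lemma diff_nonempty_of_diff_nonempty {s t : Set α} (ht : t.Finite)
    (hc : s.ncard = t.ncard) (h : (t \ s).Nonempty) : (s \ t).Nonempty := by
  rw [Set.nonempty_iff_ne_empty]
  intro h0
  have hsub : s ⊆ t := diff_eq_empty.mp h0
  have heq := Set.eq_of_subset_of_ncard_le hsub (le_of_eq hc.symm) ht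
  rw [heq, diff_self] at h
  exact Set.not_nonempty_empty h

section WithMatroid2

variable {N : Matroid α} {r : ℕ} (hfin : N.E.Finite)
  (hU : ∀ B : Set α, N.IsBase B ↔ (B ⊆ N.E ∧ B.ncard = r))

include hfin hU

lemma fix_zero (μ : ℕ) : ∀ {n : ℕ} (B B' : Fin (n + 1) → Set α), Inv N r B → Inv N r B' →
    SameUnion B B' → (B' 0 \ B 0).ncard ≤ μ →
    ∃ B₂, Relation.ReflTransGen (ExchStep N) B B₂ ∧ Inv N r B₂ ∧ SameUnion B₂ B' ∧
      B₂ 0 = B' 0 := by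
  induction μ with
  | zero =>
    intro n B B' hB hB' hsu hle
    have hfin' : (B' 0).Finite := hfin.subset (hB' 0).1
    have h0 : B' 0 \ B 0 = ∅ :=
      (Set.ncard_eq_zero hfin'.diff).mp (Nat.le_zero.mp hle)
    have hsub : B' 0 ⊆ B 0 := diff_eq_empty.mp h0
    have heq : B' 0 = B 0 :=
      Set.eq_of_subset_of_ncard_le hsub
        (le_of_eq ((hB 0).2.trans (hB' 0).2.symm)) (hfin.subset (hB 0).1)
    exact ⟨B, Relation.ReflTransGen.refl, hB, hsu, heq.symm⟩
  | succ μ ih =>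
    intro n B B' hB hB' hsu hle
    by_cases hle' : (B' 0 \ B 0).ncard ≤ μ
    · exact ih B B' hB hB' hsu hle'
    have hfinB : ∀ i, (B i).Finite := fun i => hfin.subset (hB i).1
    have hfinB' : ∀ i, (B' i).Finite := fun i => hfin.subset (hB' i).1
    have hne : (B' 0 \ B 0).Nonempty := by
      rw [Set.nonempty_iff_ne_empty]
      intro h0
      rw [h0, Set.ncard_empty] at hle'
      omega
    obtain ⟨a, ha⟩ := hne
    obtain ⟨j, haj⟩ := exists_mem_of_sameUnion hsu ha.1
    have hj0 : (0 : Fin (n + 1)) ≠ j := fun h => ha.2 (h ▸ haj)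
    by_cases hcase : ∃ b, b ∈ (B 0 \ B' 0) \ B j
    · -- direct exchange between 0 and j
      obtain ⟨b, hb⟩ := hcase
      have hstep := exists_exchStep hfin hU hB hj0
        (a := b) (b := a) ⟨hb.1.1, hb.2⟩ ⟨haj, ha.2⟩
      obtain ⟨hst, hInv2, hsu2⟩ := hstep
      set B₂ := swapped B 0 j b a with hB₂
      have h20 : B₂ 0 = (B 0 \ {b}) ∪ {a} := swapped_apply_i hj0 b a
      have hmeas : (B' 0 \ B₂ 0).ncard ≤ μ := by
        rw [h20, diff_swap_eq hb.1.2, Set.ncard_diff_singleton_of_mem ha]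
        omega
      obtain ⟨B₃, hr3, hInv3, hsu3, h3⟩ := ih B₂ B'
        hInv2 hB' (sameUnion_trans (sameUnion_symm hsu2) hsu) hmeas
      exact ⟨B₃, Relation.ReflTransGen.head hst hr3, hInv3, hsu3, h3⟩
    · -- two exchanges
      push_neg at hcase
      have hsubj : B 0 \ B' 0 ⊆ B j := by
        intro x hx
        by_contra hxj
        exact hcase x ⟨hx, hxj⟩
      have hc : (B 0 \ B' 0).Nonempty :=
        diff_nonempty_of_diff_nonempty (hfinB' 0)
          ((hB 0).2.trans (hB' 0).2.symm) ⟨a, ha⟩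
      obtain ⟨c, hc0⟩ := hc
      have hcj : c ∈ B j := hsubj hc0
      obtain ⟨j', hcj'⟩ := exists_not_mem_of_sameUnion hsu (i := 0) hc0.2
      have hjj' : j ≠ j' := fun h => hcj' (h ▸ hcj)
      have hd : (B j' \ B j).Nonempty :=
        diff_nonempty_of_diff_nonempty (hfinB j)
          ((hB j').2.trans (hB j).2.symm) ⟨c, hcj, hcj'⟩
      obtain ⟨d, hd⟩ := hd
      -- first exchange: between j and j', moving c out of B j and d in
      obtain ⟨hst1, hInv2, hsu2⟩ := exists_exchStep hfin hU hB hjj'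
        (a := c) (b := d) ⟨hcj, hcj'⟩ hd
      set B₂ := swapped B j j' c d with hB₂def
      have hj'0 : (0 : Fin (n + 1)) ≠ j' := fun h => hcj' (h ▸ hc0.1)
      have h2z : B₂ 0 = B 0 := swapped_apply_other hj0 hj'0 c d
      have h2j : B₂ j = (B j \ {c}) ∪ {d} := swapped_apply_i hjj' c d
      -- second exchange: between 0 and j, moving c out of B 0 and a in
      have hcd : c ≠ d := fun h => hcj' (h ▸ hd.1)
      have hac : a ≠ c := fun h => ha.2 (h ▸ hc0.1)
      have hc2 : c ∈ B₂ 0 \ B₂ j := by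
        rw [h2z, h2j]
        exact ⟨hc0.1, by simp [hcd]⟩
      have ha2 : a ∈ B₂ j \ B₂ 0 := by
        rw [h2z, h2j]
        exact ⟨Or.inl ⟨haj, hac⟩, ha.2⟩
      obtain ⟨hst2, hInv3, hsu3⟩ := exists_exchStep hfin hU hInv2 hj0
        (a := c) (b := a) hc2 ha2
      set B₃ := swapped B₂ 0 j c a with hB₃def
      have h30 : B₃ 0 = (B 0 \ {c}) ∪ {a} := by
        rw [hB₃def, swapped_apply_i hj0, h2z]
      have hmeas : (B' 0 \ B₃ 0).ncard ≤ μ := by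
        rw [h30, diff_swap_eq hc0.2, Set.ncard_diff_singleton_of_mem ha]
        omega
      obtain ⟨B₄, hr4, hInv4, hsu4, h4⟩ := ih B₃ B' hInv3 hB'
        (sameUnion_trans (sameUnion_symm hsu3)
          (sameUnion_trans (sameUnion_symm hsu2) hsu)) hmeas
      exact ⟨B₄, Relation.ReflTransGen.head hst1 (Relation.ReflTransGen.head hst2 hr4),
        hInv4, hsu4, h4⟩

end WithMatroid2

lemma exchStep_cons {N : Matroid α} {n : ℕ} {C C' : Fin n → Set α} (X : Set α)
    (h : ExchStep N C C') : ExchStep N (Fin.cons X C) (Fin.cons X C') := by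
  obtain ⟨i, j, hij, a, b, ha, hb, hi, hj, bi, bj, hk⟩ := h
  refine ⟨i.succ, j.succ, by simpa using hij, a, b, by simpa using ha, by simpa using hb,
    by simpa using hi, by simpa using hj, by simpa using bi, by simpa using bj, ?_⟩
  intro k hki hkj
  induction k using Fin.cases with
  | zero => simp
  | succ k' =>
    have h1 : k' ≠ i := fun h => hki (by rw [h])
    have h2 : k' ≠ j := fun h => hkj (by rw [h])
    simpa using hk k' h1 h2

lemma rtg_cons {N : Matroid α} {n : ℕ} {C C' : Fin n → Set α} (X : Set α)
    (h : Relation.ReflTransGen (ExchStep N) C C') :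
    Relation.ReflTransGen (ExchStep N) (Fin.cons X C) (Fin.cons X C') := by
  induction h with
  | refl => exact Relation.ReflTransGen.refl
  | tail _ hstep ih => exact ih.tail (exchStep_cons X hstep)

open scoped Classical in
lemma natCard_succ {n : ℕ} (P : Fin (n + 1) → Prop) :
    Nat.card {i // P i} = (if P 0 then 1 else 0) + Nat.card {i : Fin n // P (Fin.succ i)} := by
  classical
  simp only [Nat.card_eq_fintype_card, Fintype.card_subtype, Finset.card_filter]
  rw [Fin.sum_univ_succ]

lemma sameUnion_tail {n : ℕ} {B B' : Fin (n + 1) → Set α} (h : SameUnion B B')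
    (h0 : B 0 = B' 0) : SameUnion (Fin.tail B) (Fin.tail B') := by
  intro e
  have he := h e
  rw [natCard_succ (fun i => e ∈ B i), natCard_succ (fun i => e ∈ B' i), h0] at he
  simpa [Fin.tail] using Nat.add_left_cancel he

section WithMatroid3

variable {N : Matroid α} {r : ℕ} (hfin : N.E.Finite)
  (hU : ∀ B : Set α, N.IsBase B ↔ (B ⊆ N.E ∧ B.ncard = r))

include hfin hU

lemma main_rtg : ∀ (n : ℕ) (B B' : Fin n → Set α), Inv N r B → Inv N r B' →
    SameUnion B B' → Relation.ReflTransGen (ExchStep N) B B' := by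
  intro n
  induction n with
  | zero =>
    intro B B' _ _ _
    have : B = B' := funext fun i => i.elim0
    exact this ▸ Relation.ReflTransGen.refl
  | succ n ih =>
    intro B B' hB hB' hsu
    obtain ⟨B₂, hr2, hInv2, hsu2, h20⟩ :=
      fix_zero hfin hU ((B' 0 \ B 0).ncard) B B' hB hB' hsu le_rfl
    have hT : Inv N r (Fin.tail B₂) := fun i => hInv2 i.succ
    have hT' : Inv N r (Fin.tail B') := fun i => hB' i.succ
    have hsuT : SameUnion (Fin.tail B₂) (Fin.tail B') := sameUnion_tail hsu2 h20
    have hr3 := rtg_cons (N := N) (B₂ 0) (ih (Fin.tail B₂) (Fin.tail B') hT hT' hsuT)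
    rw [Fin.cons_self_tail] at hr3
    rw [h20, Fin.cons_self_tail] at hr3
    exact hr2.trans hr3

end WithMatroid3

/-- White's conjecture holds for uniform matroids: if the bases of `N` are exactly the
size-`r` subsets of the ground set, then any two tuples of size-`r` subsets with the
same multiset union are connected by an exchange sequence in `N`. -/
theorem white_uniform (N : Matroid α) (r : ℕ) (hfin : N.E.Finite)
    (hU : ∀ B : Set α, N.IsBase B ↔ (B ⊆ N.E ∧ B.ncard = r)) :
    ∀ (n : ℕ) (B B' : Fin n → Set α),
      (∀ i, B i ⊆ N.E ∧ (B i).ncard = r) →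
      (∀ i, B' i ⊆ N.E ∧ (B' i).ncard = r) →
      SameUnion B B' → ExchConnected N B B' := by
  intro n B B' hB hB' hsu
  exact exchConnected_of_rtg (main_rtg hfin hU n B B' hB hB' hsu)

end WhitePaving
end
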